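/- arXiv:0901.2350 — 2 statements merged into one kernel-verified Lean document; each statement's English description precedes it below -/
import Mathlib

section
/- Fix an integer n ≥ 2 and positive real numbers a, b. The two inequalities (n² + n − 1)b² + n·a·b − n²·a² > 0 and −n²·b² + n·a·b + (n² + n − 1)a² > 0 hold simultaneously if and only if m(n)·a < b < m(n)⁻¹·a, where m(n) = (−n + n·√(4n² + 4n − 3)) / (2(n² + n − 1)). -/
/-- The positive root of `C x² + N x − N²`, whose discriminant is `N² (1 + 4C)`. -/
noncomputable def posRoot (C N : ℝ) : ℝ := (-N + N * √(1 + 4 * C)) / (2 * C)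

lemma posRoot_pos {C N : ℝ} (hC : 0 < C) (hN : 0 < N) : 0 < posRoot C N := by
  have hsqrt : 1 < √(1 + 4 * C) := by
    rw [Real.lt_sqrt zero_le_one]
    linarith
  unfold posRoot
  apply div_pos _ (by positivity)
  nlinarith

lemma posRoot_isRoot {C N : ℝ} (hC : 0 < C) :
    C * posRoot C N ^ 2 + N * posRoot C N - N ^ 2 = 0 := by
  have hdiscrim : discrim C N (-N ^ 2) = (N * √(1 + 4 * C)) * (N * √(1 + 4 * C)) := by
    rw [discrim, mul_mul_mul_comm, Real.mul_self_sqrt (by linarith)]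
    ring
  have h := (quadratic_eq_zero_iff hC.ne' hdiscrim (posRoot C N)).mpr (Or.inl rfl)
  linear_combination h

/-- Since `m` is a root, the form factors as `(y − m x) (C y + (C m + N) x)` with positive second factor. -/
lemma quadForm_pos_iff {C N m x y : ℝ} (hC : 0 < C) (hN : 0 < N) (hm : 0 < m)
    (hroot : C * m ^ 2 + N * m - N ^ 2 = 0) (hx : 0 < x) (hy : 0 < y) :
    0 < C * y ^ 2 + N * x * y - N ^ 2 * x ^ 2 ↔ m * x < y := by
  have hfactor : C * y ^ 2 + N * x * y - N ^ 2 * x ^ 2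
      = (y - m * x) * (C * y + (C * m + N) * x) := by
    linear_combination x ^ 2 * hroot
  have hpos : 0 < C * y + (C * m + N) * x := by positivity
  rw [hfactor, mul_pos_iff_of_pos_right hpos, sub_pos]

/-- For `n ≥ 2` and positive reals `a`, `b`, the two stability inequalities
`(n²+n−1)b² + nab − n²a² > 0` and `−n²b² + nab + (n²+n−1)a² > 0` hold simultaneously
iff `m(n)·a < b < m(n)⁻¹·a`, where `m(n) = (−n + n√(4n²+4n−3))/(2(n²+n−1))`. -/
theorem stmt_6 (n : ℕ) (hn : 2 ≤ n) (a b : ℝ) (ha : 0 < a) (hb : 0 < b) :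
    let m : ℝ := (-(n : ℝ) + n * Real.sqrt (4 * n ^ 2 + 4 * n - 3)) /
      (2 * ((n : ℝ) ^ 2 + n - 1))
    ((((n : ℝ) ^ 2 + n - 1) * b ^ 2 + n * a * b - n ^ 2 * a ^ 2 > 0) ∧
      (-(n : ℝ) ^ 2 * b ^ 2 + n * a * b + ((n : ℝ) ^ 2 + n - 1) * a ^ 2 > 0)) ↔
    (m * a < b ∧ b < m⁻¹ * a) := by
  intro m
  have hN : (2 : ℝ) ≤ n := by exact_mod_cast hn
  have hC : (0 : ℝ) < (n : ℝ) ^ 2 + n - 1 := by nlinarith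
  have hm : m = posRoot ((n : ℝ) ^ 2 + n - 1) n := by
    simp only [m, posRoot]
    ring_nf
  have hmpos : 0 < m := hm ▸ posRoot_pos hC (by linarith)
  have hroot := hm ▸ posRoot_isRoot (N := (n : ℝ)) hC
  have hswap : -(n : ℝ) ^ 2 * b ^ 2 + n * a * b + ((n : ℝ) ^ 2 + n - 1) * a ^ 2
      = ((n : ℝ) ^ 2 + n - 1) * a ^ 2 + n * b * a - n ^ 2 * b ^ 2 := by ring
  rw [gt_iff_lt, gt_iff_lt, hswap, quadForm_pos_iff hC (by linarith) hmpos hroot ha hb,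
    quadForm_pos_iff hC (by linarith) hmpos hroot hb ha, lt_inv_mul_iff₀ hmpos]
end

section
/- Fix an integer n ≥ 2 and positive integers a, b. If the two non-strict inequalities (n² + n − 1)b² + n·a·b − n²·a² ≥ 0 and −n²·b² + n·a·b + (n² + n − 1)a² ≥ 0 both hold, then the corresponding strict inequalities also hold. (Equivalently: semistability of the tangent bundle of F(0,n−1,n) with respect to an integral polarization O(a,b) implies its stability.) -/
lemma key_ne (n a b : ℤ) (hn : 2 ≤ n) (ha : 0 < a) (hb : 0 < b) :
    (n^2 + n - 1) * b^2 + n*a*b - n^2*a^2 ≠ 0 := by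
  intro h
  have hsq : (2*(n^2+n-1)*b + n*a)^2 = (n*a)^2 * (4*n^2+4*n-3) := by
    linear_combination (4*(n^2+n-1)) * h
  set s := 2*(n^2+n-1)*b + n*a with hs
  set t := n*a with ht
  have htpos : 0 < t := by nlinarith
  have hdvd : t ∣ s := by
    rw [← Int.pow_dvd_pow_iff (two_ne_zero)]
    exact ⟨4*n^2+4*n-3, hsq⟩
  obtain ⟨q, hq⟩ := hdvd
  have hqsq : q^2 = 4*n^2+4*n-3 := by
    have h2 : t^2 * q^2 = t^2 * (4*n^2+4*n-3) := by rw [← hsq, hq]; ring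
    exact mul_left_cancel₀ (by positivity) h2
  have hqpos : 0 < q := by
    rcases lt_trichotomy q 0 with h'|h'|h'
    · nlinarith
    · nlinarith
    · exact h'
  have h1 : 2*n < q := by nlinarith
  have h2 : q < 2*n+1 := by nlinarith
  omega

/-- For `n ≥ 2` and positive integers `a`, `b`: if the two non-strict stability
inequalities hold, then the strict ones hold (semistability implies stability for
integral polarizations on `F(0,n−1,n)`). -/
theorem stmt_7 (n : ℕ) (hn : 2 ≤ n) (a b : ℕ) (ha : 0 < a) (hb : 0 < b)
    (h1 : (((n : ℝ) ^ 2 + n - 1) * b ^ 2 + n * a * b - n ^ 2 * a ^ 2) ≥ 0)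
    (h2 : (-(n : ℝ) ^ 2 * b ^ 2 + n * a * b + ((n : ℝ) ^ 2 + n - 1) * a ^ 2) ≥ 0) :
    (((n : ℝ) ^ 2 + n - 1) * b ^ 2 + n * a * b - n ^ 2 * a ^ 2 > 0) ∧
      (-(n : ℝ) ^ 2 * b ^ 2 + n * a * b + ((n : ℝ) ^ 2 + n - 1) * a ^ 2 > 0) := by
  have hn' : (2:ℤ) ≤ (n:ℤ) := by exact_mod_cast hn
  have ha' : (0:ℤ) < (a:ℤ) := by exact_mod_cast ha
  have hb' : (0:ℤ) < (b:ℤ) := by exact_mod_cast hb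
  have e1 : (((n : ℝ) ^ 2 + n - 1) * b ^ 2 + n * a * b - n ^ 2 * a ^ 2)
      = (((((n:ℤ)^2 + n - 1) * b^2 + n*a*b - n^2*a^2) : ℤ) : ℝ) := by
    push_cast; ring
  have e2 : (-(n : ℝ) ^ 2 * b ^ 2 + n * a * b + ((n : ℝ) ^ 2 + n - 1) * a ^ 2)
      = (((((n:ℤ)^2 + n - 1) * a^2 + n*b*a - n^2*b^2) : ℤ) : ℝ) := by
    push_cast; ring
  constructor
  · rw [e1] at h1 ⊢
    refine lt_of_le_of_ne h1 ?_
    exact fun hc => key_ne n a b hn' ha' hb' (by exact_mod_cast hc.symm)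
  · rw [e2] at h2 ⊢
    refine lt_of_le_of_ne h2 ?_
    exact fun hc => key_ne n b a hn' hb' ha' (by exact_mod_cast hc.symm)
end
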